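/- arXiv:1702.02790 — 8 statements merged into one kernel-verified Lean document; each statement's English description precedes it below -/
import Mathlib

section
/- Let Q be an N×N real matrix and π ∈ ℝ^N a row vector, and suppose there exist constants c > 0 and λ > 0 such that ‖e^{Qu} − 𝟙π‖ ≤ c e^{−λu} for all u ≥ 0. Let s > 0 and define D(t) = ∫₀ᵗ (e^{Qu} − 𝟙π) du. Then sI − Q is invertible and the Laplace transform of the transient deviation matrix satisfies ∫₀^∞ e^{−st} D(t) dt = (1/s)(sI − Q)^{−1} − (1/s²)𝟙π. -/
open Matrix MeasureTheory

/-! The Laplace transform of a derivative is `s F̂ - F 0` as soon as `e^{-st} F t` is integrable and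
tends to `0`. For `F t = e^{tQ}`, bounded since `‖e^{tQ} - 𝟙π‖ ≤ c`, this reads
`(sI - Q) ∫₀^∞ e^{-st} e^{tQ} dt = I`, so the resolvent is the Laplace transform of the semigroup.
For `F = D`, which is bounded by `c / λ` and satisfies `D' = e^{tQ} - 𝟙π`, `D 0 = 0`, it reads
`s D̂ = (sI - Q)⁻¹ - 𝟙π / s`. -/

section Laplace

open Real Set Filter Topology

variable {E : Type*} [NormedAddCommGroup E]

theorem norm_le_of_norm_le_mul_exp_neg {g : ℝ → E} {c lam : ℝ} (hlam : 0 ≤ lam)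
    (hg : ∀ u, 0 ≤ u → ‖g u‖ ≤ c * exp (-lam * u)) {u : ℝ} (hu : 0 ≤ u) : ‖g u‖ ≤ c := by
  have hc : 0 ≤ c := by simpa using (norm_nonneg _).trans (hg 0 le_rfl)
  exact (hg u hu).trans
    (mul_le_of_le_one_right hc (exp_le_one_iff.2 (by nlinarith)))

variable [NormedSpace ℝ E]

theorem integral_exp_neg_mul_Ioi_zero {s : ℝ} (hs : 0 < s) :
    ∫ t in Ioi (0 : ℝ), exp (-s * t) = s⁻¹ := by
  rw [integral_exp_mul_Ioi (neg_neg_of_pos hs), mul_zero, exp_zero, neg_div, div_neg, neg_neg,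
    one_div]

theorem integrableOn_Ioi_exp_neg_mul_smul {f : ℝ → E} {s K : ℝ} (hs : 0 < s)
    (hf : ContinuousOn f (Ioi 0)) (hK : ∀ t ∈ Ioi (0 : ℝ), ‖f t‖ ≤ K) :
    IntegrableOn (fun t => exp (-s * t) • f t) (Ioi 0) := by
  refine ((exp_neg_integrableOn_Ioi 0 hs).const_mul K).mono'
    ((continuous_exp.comp (continuous_const.mul continuous_id)).continuousOn.smul hf
      |>.aestronglyMeasurable measurableSet_Ioi) ?_
  filter_upwards [self_mem_ae_restrict measurableSet_Ioi] with t ht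
  rw [norm_smul, norm_of_nonneg (exp_pos _).le, mul_comm]
  exact mul_le_mul_of_nonneg_right (hK t ht) (exp_pos _).le

theorem tendsto_exp_neg_mul_smul_atTop {f : ℝ → E} {s : ℝ} (hs : 0 < s)
    (hf : IsBoundedUnder (· ≤ ·) atTop (fun t => ‖f t‖)) :
    Tendsto (fun t => exp (-s * t) • f t) atTop (𝓝 0) :=
  (tendsto_exp_atBot.comp ((tendsto_const_nhds.neg_mul_atTop (neg_neg_of_pos hs) tendsto_id))
    |>.zero_smul_isBoundedUnder_le hf)

theorem integral_exp_neg_mul_smul_deriv [CompleteSpace E] {f f' : ℝ → E} {s : ℝ}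
    (hf : ∀ t ∈ Ici (0 : ℝ), HasDerivAt f (f' t) t)
    (hfi : IntegrableOn (fun t => exp (-s * t) • f t) (Ioi 0))
    (hf'i : IntegrableOn (fun t => exp (-s * t) • f' t) (Ioi 0))
    (hlim : Tendsto (fun t => exp (-s * t) • f t) atTop (𝓝 0)) :
    ∫ t in Ioi 0, exp (-s * t) • f' t = s • (∫ t in Ioi 0, exp (-s * t) • f t) - f 0 := by
  have hderiv : ∀ t ∈ Ici (0 : ℝ), HasDerivAt (fun u => exp (-s * u) • f u)
      (exp (-s * t) • f' t - s • (exp (-s * t) • f t)) t := fun t ht =>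
    ((((hasDerivAt_id' t).const_mul (-s)).exp).smul (hf t ht)).congr_deriv (by module)
  have h := integral_Ioi_of_hasDerivAt_of_tendsto' hderiv (hf'i.sub (hfi.smul s)) hlim
  rw [integral_sub (g := fun t => s • (exp (-s * t) • f t)) hf'i (hfi.smul s), integral_smul,
    mul_zero, exp_zero, one_smul, zero_sub] at h
  rw [sub_eq_iff_eq_add] at h
  rw [h, neg_add_eq_sub]

theorem norm_intervalIntegral_le_of_norm_le_mul_exp_neg {g : ℝ → E} {c lam t : ℝ}
    (hlam : 0 < lam) (ht : 0 ≤ t)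
    (hg : ∀ u, 0 ≤ u → ‖g u‖ ≤ c * exp (-lam * u)) :
    ‖∫ u in 0..t, g u‖ ≤ c / lam := by
  have hc : 0 ≤ c := (norm_nonneg _).trans (norm_le_of_norm_le_mul_exp_neg hlam.le hg le_rfl)
  have hint : IntegrableOn (fun u => c * exp (-lam * u)) (Ioi 0) :=
    (exp_neg_integrableOn_Ioi 0 hlam).const_mul c
  rw [intervalIntegral.integral_of_le ht]
  calc ‖∫ u in Ioc 0 t, g u‖ ≤ ∫ u in Ioc 0 t, c * exp (-lam * u) :=
        norm_integral_le_of_norm_le (hint.mono_set Ioc_subset_Ioi_self)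
          ((ae_restrict_iff' measurableSet_Ioc).2 (ae_of_all _ fun u hu => hg u hu.1.le))
    _ ≤ ∫ u in Ioi 0, c * exp (-lam * u) :=
        setIntegral_mono_set hint (.of_forall fun u => by positivity)
          Ioc_subset_Ioi_self.eventuallyLE
    _ = c / lam := by rw [integral_const_mul, integral_exp_neg_mul_Ioi_zero hlam, div_eq_mul_inv]

theorem integral_exp_neg_mul_smul_intervalIntegral [CompleteSpace E] {g : ℝ → E} {s K : ℝ}
    (hs : 0 < s) (hg : Continuous g)
    (hgi : IntegrableOn (fun t => exp (-s * t) • g t) (Ioi 0))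
    (hK : ∀ t, 0 ≤ t → ‖∫ u in 0..t, g u‖ ≤ K) :
    ∫ t in Ioi 0, exp (-s * t) • ∫ u in 0..t, g u = s⁻¹ • ∫ t in Ioi 0, exp (-s * t) • g t := by
  have hderiv : ∀ t, HasDerivAt (fun t => ∫ u in 0..t, g u) (g t) t := fun t =>
    intervalIntegral.integral_hasDerivAt_right (hg.intervalIntegrable _ _)
      hg.aestronglyMeasurable.stronglyMeasurableAtFilter hg.continuousAt
  have hcont : Continuous fun t => ∫ u in 0..t, g u :=
    continuous_iff_continuousAt.2 fun t => (hderiv t).continuousAt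
  have h := integral_exp_neg_mul_smul_deriv (fun t _ => hderiv t)
    (integrableOn_Ioi_exp_neg_mul_smul hs hcont.continuousOn fun t ht => hK t (le_of_lt ht))
    hgi (tendsto_exp_neg_mul_smul_atTop hs
      (isBoundedUnder_of_eventually_le ((eventually_ge_atTop 0).mono hK)))
  simp only [h, intervalIntegral.integral_same, sub_zero, inv_smul_smul₀ hs.ne']

end Laplace

/- Differentiability only depends on the topology, so it can be computed with the
submultiplicative operator norm. -/
section LinftyOpNorm

attribute [local instance] Matrix.linftyOpNormedRing Matrix.linftyOpNormedAlgebra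

variable {n : Type*} [Fintype n] [DecidableEq n]

theorem Matrix.hasDerivAt_exp_smul (Q : Matrix n n ℝ) (t : ℝ) :
    HasDerivAt (fun u : ℝ => NormedSpace.exp (u • Q)) (Q * NormedSpace.exp (t • Q)) t :=
  hasDerivAt_exp_smul_const' Q t

theorem Matrix.continuous_exp_smul (Q : Matrix n n ℝ) :
    Continuous fun u : ℝ => NormedSpace.exp (u • Q) :=
  continuous_iff_continuousAt.2 fun t => (hasDerivAt_exp_smul Q t).continuousAt

end LinftyOpNorm

attribute [local instance] Matrix.normedAddCommGroup Matrix.normedSpace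

namespace Matrix

variable {n : Type*} [Fintype n] [DecidableEq n]

open Real Set Filter in
theorem sub_mul_integral_exp_neg_mul_smul_exp {Q : Matrix n n ℝ} {s K : ℝ} (hs : 0 < s)
    (hK : ∀ t : ℝ, 0 ≤ t → ‖NormedSpace.exp (t • Q)‖ ≤ K) :
    (s • 1 - Q) * ∫ t in Ioi 0, exp (-s * t) • NormedSpace.exp (t • Q) = 1 := by
  have hint := integrableOn_Ioi_exp_neg_mul_smul hs (continuous_exp_smul Q).continuousOn
    fun t ht => hK t (le_of_lt ht)
  let mulQ := (LinearMap.mulLeft ℝ Q).toContinuousLinearMap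
  have hQ : ∫ t in Ioi 0, exp (-s * t) • (Q * NormedSpace.exp (t • Q)) =
      Q * ∫ t in Ioi 0, exp (-s * t) • NormedSpace.exp (t • Q) :=
    (integral_congr_ae (ae_of_all _ fun t => (Matrix.mul_smul _ _ _).symm)).trans
      (mulQ.integral_comp_comm hint)
  have h := integral_exp_neg_mul_smul_deriv (fun t _ => hasDerivAt_exp_smul Q t) hint
    ((mulQ.integrable_comp hint).congr (ae_of_all _ fun t => Matrix.mul_smul _ _ _))
    (tendsto_exp_neg_mul_smul_atTop hs
      (isBoundedUnder_of_eventually_le ((eventually_ge_atTop (0 : ℝ)).mono hK)))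
  rw [hQ, zero_smul, NormedSpace.exp_zero] at h
  rw [Matrix.sub_mul, h, Matrix.smul_mul, Matrix.one_mul, sub_sub_cancel]

end Matrix

theorem laplace_transform_transient_deviation_matrix_general
    (N : ℕ) (Q : Matrix (Fin N) (Fin N) ℝ)
    (onePi : Matrix (Fin N) (Fin N) ℝ)
    (c lam : ℝ) (hlam : 0 < lam)
    (hErg : ∀ u : ℝ, 0 ≤ u →
      ‖NormedSpace.exp (u • Q) - onePi‖ ≤ c * Real.exp (-lam * u))
    (s : ℝ) (hs : 0 < s)
    (D : ℝ → Matrix (Fin N) (Fin N) ℝ)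
    (hD : ∀ t : ℝ, D t = ∫ u in (0:ℝ)..t, (NormedSpace.exp (u • Q) - onePi)) :
    IsUnit (s • (1 : Matrix (Fin N) (Fin N) ℝ) - Q) ∧
      (∫ t in Set.Ioi (0:ℝ), Real.exp (-s * t) • D t) =
        (1 / s) • (s • (1 : Matrix (Fin N) (Fin N) ℝ) - Q)⁻¹ - (1 / s ^ 2) • onePi := by
  have hdev_cont : Continuous fun u : ℝ => NormedSpace.exp (u • Q) - onePi :=
    (Matrix.continuous_exp_smul Q).sub continuous_const
  have hdev_le (u : ℝ) (hu : 0 ≤ u) : ‖NormedSpace.exp (u • Q) - onePi‖ ≤ c :=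
    norm_le_of_norm_le_mul_exp_neg hlam.le hErg hu
  have hexp_le (u : ℝ) (hu : 0 ≤ u) : ‖NormedSpace.exp (u • Q)‖ ≤ ‖onePi‖ + c :=
    (norm_le_norm_add_norm_sub' _ onePi).trans (add_le_add_right (hdev_le u hu) _)
  have hinv := Matrix.sub_mul_integral_exp_neg_mul_smul_exp hs hexp_le
  have hexp_int := integrableOn_Ioi_exp_neg_mul_smul hs
    (Matrix.continuous_exp_smul Q).continuousOn fun u hu => hexp_le u (le_of_lt hu)
  have hdev_int := integrableOn_Ioi_exp_neg_mul_smul hs hdev_cont.continuousOn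
    fun u hu => hdev_le u (le_of_lt hu)
  have hlaplace_dev : ∫ t in Set.Ioi 0, Real.exp (-s * t) • (NormedSpace.exp (t • Q) - onePi) =
      (∫ t in Set.Ioi 0, Real.exp (-s * t) • NormedSpace.exp (t • Q)) - s⁻¹ • onePi := by
    simp_rw [smul_sub]
    rw [integral_sub hexp_int ((exp_neg_integrableOn_Ioi 0 hs).smul_const onePi),
      integral_smul_const, integral_exp_neg_mul_Ioi_zero hs]
  simp only [hD]
  refine ⟨(s • 1 - Q).isUnit_iff_isUnit_det.2 (Matrix.isUnit_det_of_right_inverse hinv), ?_⟩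
  rw [integral_exp_neg_mul_smul_intervalIntegral hs hdev_cont hdev_int
    (fun t ht => norm_intervalIntegral_le_of_norm_le_mul_exp_neg hlam ht hErg), hlaplace_dev,
    Matrix.inv_eq_right_inv hinv]
  module

/-- Under exponential ergodicity `‖e^{Qu} − 𝟙π‖ ≤ c e^{−λu}`, for every `s > 0`
the matrix `sI − Q` is invertible and the Laplace transform of the transient deviation matrix
`D(t) = ∫₀ᵗ (e^{Qu} − 𝟙π) du` satisfies
`∫₀^∞ e^{−st} D(t) dt = (1/s)(sI − Q)⁻¹ − (1/s²) 𝟙π`. -/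
theorem laplace_transform_transient_deviation_matrix
    (N : ℕ) (Q : Matrix (Fin N) (Fin N) ℝ)
    (π : Fin N → ℝ)
    (onePi : Matrix (Fin N) (Fin N) ℝ)
    (honePi : ∀ i j, onePi i j = π j)
    (c lam : ℝ) (hc : 0 < c) (hlam : 0 < lam)
    (hErg : ∀ u : ℝ, 0 ≤ u →
      ‖NormedSpace.exp (u • Q) - onePi‖ ≤ c * Real.exp (-lam * u))
    (s : ℝ) (hs : 0 < s)
    (D : ℝ → Matrix (Fin N) (Fin N) ℝ)
    (hD : ∀ t : ℝ, D t = ∫ u in (0:ℝ)..t, (NormedSpace.exp (u • Q) - onePi)) :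
    IsUnit (s • (1 : Matrix (Fin N) (Fin N) ℝ) - Q) ∧
      (∫ t in Set.Ioi (0:ℝ), Real.exp (-s * t) • D t) =
        (1 / s) • (s • (1 : Matrix (Fin N) (Fin N) ℝ) - Q)⁻¹ - (1 / s ^ 2) • onePi :=
  laplace_transform_transient_deviation_matrix_general N Q onePi c lam hlam hErg s hs D hD
end

section
/- Let A₋₁, A₀, A₁, G, Ĝ, H be n×n real matrices satisfying A₋₁ + A₀G + A₁G² = 0, A₁ + A₀Ĝ + A₋₁Ĝ² = 0, and (A₀ + A₁G + A₋₁Ĝ)H = −I. Let C ≥ 1, let g₀, …, g_C ∈ ℝⁿ, and let v, w ∈ ℝⁿ be arbitrary. For 0 ≤ k ≤ C define ν_k = Σ_{j=0}^{k−1} Gʲ H g_{k−j} + Σ_{j=1}^{C−k} Ĝʲ H g_{k+j} (empty sums being zero) and u_k = Gᵏ v + Ĝ^{C−k} w + ν_k. Then u satisfies the second-order matrix difference equation A₋₁ u_{k−1} + A₀ u_k + A₁ u_{k+1} = −g_k for every k with 1 ≤ k ≤ C−1. -/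
open Matrix Finset

/-!
Write `K(k, i) = G^(k-i)` for `i ≤ k` and `K(k, i) = Ĝ^(i-k)` for `i ≥ k`. Then
`Gᵏ = K(k, 0)`, `Ĝ^(C-k) = K(k, C)` and `ν_k = Σ_{0 < i ≤ C} K(k, i) H g_i`, so `u` is a
superposition of columns of `K`. Each column solves the homogeneous equation away from its
diagonal: below it the quadratic equation for `G` cancels the three terms, above it the one
for `Ĝ` does. On the diagonal the three terms add up to `A₀ + A₁G + A₋₁Ĝ`, which turns
`H g_k` into `-g_k`.
-/

section Ring

variable {R : Type*} [Ring R] {G Gh : R} {k i : ℕ}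

def greenKernel (G Gh : R) (k i : ℕ) : R :=
  if i ≤ k then G ^ (k - i) else Gh ^ (i - k)

theorem greenKernel_of_le (h : i ≤ k) : greenKernel G Gh k i = G ^ (k - i) :=
  if_pos h

theorem greenKernel_of_ge (h : k ≤ i) : greenKernel G Gh k i = Gh ^ (i - k) := by
  rcases h.eq_or_lt with rfl | h
  · simp [greenKernel]
  · exact if_neg (not_le.2 h)

theorem greenKernel_self : greenKernel G Gh k k = 1 := by
  simp [greenKernel]

theorem greenKernel_succ_left_of_le (h : i ≤ k) :
    greenKernel G Gh (k + 1) i = G * greenKernel G Gh k i := by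
  rw [greenKernel_of_le h, greenKernel_of_le (h.trans k.le_succ), Nat.succ_sub h, pow_succ']

theorem greenKernel_of_lt (h : k < i) :
    greenKernel G Gh k i = Gh * greenKernel G Gh (k + 1) i := by
  rw [greenKernel_of_ge h.le, greenKernel_of_ge h, ← pow_succ']
  congr 1
  omega

theorem threeTerm_greenKernel {Am A0 A1 : R}
    (hG : Am + A0 * G + A1 * G ^ 2 = 0) (hGh : A1 + A0 * Gh + Am * Gh ^ 2 = 0)
    (hk : 1 ≤ k) (i : ℕ) :
    Am * greenKernel G Gh (k - 1) i + A0 * greenKernel G Gh k i +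
      A1 * greenKernel G Gh (k + 1) i = if i = k then A0 + A1 * G + Am * Gh else 0 := by
  obtain ⟨m, rfl⟩ := Nat.exists_eq_add_of_le' hk
  rw [Nat.add_sub_cancel]
  rcases lt_trichotomy i (m + 1) with hi | rfl | hi
  · rw [if_neg hi.ne, greenKernel_succ_left_of_le hi.le,
      greenKernel_succ_left_of_le (Nat.le_of_lt_succ hi), ← zero_mul (greenKernel G Gh m i),
      ← hG]
    simp only [sq, add_mul, mul_assoc]
  · rw [if_pos rfl, greenKernel_of_lt m.lt_succ_self, greenKernel_succ_left_of_le le_rfl,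
      greenKernel_self]
    simp only [mul_one]
    abel
  · rw [if_neg hi.ne', greenKernel_of_lt (m.lt_succ_self.trans hi), greenKernel_of_lt hi,
      ← zero_mul (greenKernel G Gh (m + 1 + 1) i), ← hGh]
    simp only [sq, add_mul, mul_assoc]
    abel

end Ring

section Matrix

variable {m R : Type*} [Fintype m] [Ring R]

def threeTermOp (Am A0 A1 : Matrix m m R) (u : ℕ → m → R) (k : ℕ) : m → R :=
  Am *ᵥ u (k - 1) + A0 *ᵥ u k + A1 *ᵥ u (k + 1)

variable {Am A0 A1 : Matrix m m R}

theorem threeTermOp_add (u u' : ℕ → m → R) (k : ℕ) :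
    threeTermOp Am A0 A1 (u + u') k = threeTermOp Am A0 A1 u k + threeTermOp Am A0 A1 u' k := by
  simp only [threeTermOp, Pi.add_apply, mulVec_add]
  abel

theorem threeTermOp_sum {ι : Type*} (s : Finset ι) (u : ι → ℕ → m → R) (k : ℕ) :
    threeTermOp Am A0 A1 (∑ i ∈ s, u i) k = ∑ i ∈ s, threeTermOp Am A0 A1 (u i) k := by
  simp only [threeTermOp, Finset.sum_apply, mulVec_sum, sum_add_distrib]

theorem threeTermOp_mulVec (X : ℕ → Matrix m m R) (x : m → R) (k : ℕ) :
    threeTermOp Am A0 A1 (fun k => X k *ᵥ x) k =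
      (Am * X (k - 1) + A0 * X k + A1 * X (k + 1)) *ᵥ x := by
  simp only [threeTermOp, add_mulVec, mulVec_mulVec]

variable [DecidableEq m]

theorem threeTermOp_greenKernel_mulVec {G Gh : Matrix m m R}
    (hG : Am + A0 * G + A1 * G ^ 2 = 0) (hGh : A1 + A0 * Gh + Am * Gh ^ 2 = 0)
    {k : ℕ} (hk : 1 ≤ k) (i : ℕ) (x : m → R) :
    threeTermOp Am A0 A1 (fun k => greenKernel G Gh k i *ᵥ x) k =
      if i = k then (A0 + A1 * G + Am * Gh) *ᵥ x else 0 := by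
  rw [threeTermOp_mulVec, threeTerm_greenKernel hG hGh hk]
  split_ifs <;> simp only [zero_mulVec]

theorem sum_greenKernel_mulVec (G Gh : Matrix m m R) (y : ℕ → m → R) {k C : ℕ} (hk : k ≤ C) :
    ∑ i ∈ Ioc 0 C, greenKernel G Gh k i *ᵥ y i =
      ∑ j ∈ range k, G ^ j *ᵥ y (k - j) + ∑ j ∈ Icc 1 (C - k), Gh ^ j *ᵥ y (k + j) := by
  rw [← sum_Ioc_consecutive _ (Nat.zero_le k) hk]
  congr 1
  · refine sum_nbij' (k - ·) (k - ·) ?_ ?_ ?_ ?_ fun j hj => ?_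
    any_goals intro j hj; simp only [mem_Ioc, mem_range] at hj ⊢; omega
    rw [mem_Ioc] at hj
    rw [greenKernel_of_le hj.2, Nat.sub_sub_self hj.2]
  · refine sum_nbij' (· - k) (k + ·) ?_ ?_ ?_ ?_ fun j hj => ?_
    any_goals intro j hj; simp only [mem_Ioc, mem_Icc] at hj ⊢; omega
    rw [mem_Ioc] at hj
    rw [greenKernel_of_ge hj.1.le, Nat.add_sub_cancel' hj.1.le]

end Matrix

theorem matrix_difference_equation_general_solution_general
    (n : ℕ) (Am A0 A1 G Gh H : Matrix (Fin n) (Fin n) ℝ)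
    (hG : Am + A0 * G + A1 * G ^ 2 = 0)
    (hGh : A1 + A0 * Gh + Am * Gh ^ 2 = 0)
    (hH : (A0 + A1 * G + Am * Gh) * H = -1)
    (C : ℕ)
    (g : ℕ → Fin n → ℝ)
    (v w : Fin n → ℝ)
    (ν : ℕ → Fin n → ℝ)
    (hν : ∀ k, k ≤ C → ν k =
      (∑ j ∈ Finset.range k, (G ^ j * H) *ᵥ g (k - j)) +
      (∑ j ∈ Finset.Icc 1 (C - k), (Gh ^ j * H) *ᵥ g (k + j)))
    (u : ℕ → Fin n → ℝ)
    (hu : ∀ k, k ≤ C → u k = (G ^ k) *ᵥ v + (Gh ^ (C - k)) *ᵥ w + ν k) :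
    ∀ k, 1 ≤ k → k ≤ C - 1 →
      Am *ᵥ u (k - 1) + A0 *ᵥ u k + A1 *ᵥ u (k + 1) = -g k := by
  intro k hk hkC
  set u' : ℕ → Fin n → ℝ := (fun j => greenKernel G Gh j 0 *ᵥ v) +
    (fun j => greenKernel G Gh j C *ᵥ w) +
    ∑ i ∈ Ioc 0 C, fun j => greenKernel G Gh j i *ᵥ (H *ᵥ g i)
  have hu' : ∀ j ≤ C, u j = u' j := fun j hj => by
    simp only [hu j hj, hν j hj, u', Pi.add_apply, Finset.sum_apply, ← mulVec_mulVec,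
      sum_greenKernel_mulVec _ _ _ hj, greenKernel_of_le (Nat.zero_le j), greenKernel_of_ge hj,
      Nat.sub_zero]
  rw [hu' (k - 1) (by omega), hu' k (by omega), hu' (k + 1) (by omega)]
  change threeTermOp Am A0 A1 u' k = -g k
  simp only [u', threeTermOp_add, threeTermOp_sum, threeTermOp_greenKernel_mulVec hG hGh hk,
    if_neg (by omega : 0 ≠ k), if_neg (by omega : C ≠ k), sum_ite_eq', mem_Ioc,
    if_pos (by omega : 0 < k ∧ k ≤ C), zero_add]
  rw [mulVec_mulVec, hH, neg_mulVec, one_mulVec]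

/-- (Lemma 1 of the paper, sufficiency part.) If `G`, `Gh` solve the matrix
quadratic equations `A₋₁ + A₀X + A₁X² = 0` and `A₁ + A₀X + A₋₁X² = 0` and
`(A₀ + A₁G + A₋₁Gh)H = −I`, then for arbitrary `v, w` the vectors
`u_k = Gᵏ v + Gh^{C−k} w + ν_k`, with
`ν_k = Σ_{j=0}^{k−1} Gʲ H g_{k−j} + Σ_{j=1}^{C−k} Ghʲ H g_{k+j}`, satisfy
`A₋₁ u_{k−1} + A₀ u_k + A₁ u_{k+1} = −g_k` for `1 ≤ k ≤ C−1`.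
Here `Am`, `A0`, `A1` denote `A₋₁`, `A₀`, `A₁` and `Gh` denotes the matrix Gh. -/
theorem matrix_difference_equation_general_solution
    (n : ℕ) (Am A0 A1 G Gh H : Matrix (Fin n) (Fin n) ℝ)
    (hG : Am + A0 * G + A1 * G ^ 2 = 0)
    (hGh : A1 + A0 * Gh + Am * Gh ^ 2 = 0)
    (hH : (A0 + A1 * G + Am * Gh) * H = -1)
    (C : ℕ) (hC : 1 ≤ C)
    (g : ℕ → Fin n → ℝ)
    (v w : Fin n → ℝ)
    (ν : ℕ → Fin n → ℝ)
    (hν : ∀ k, k ≤ C → ν k =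
      (∑ j ∈ Finset.range k, (G ^ j * H) *ᵥ g (k - j)) +
      (∑ j ∈ Finset.Icc 1 (C - k), (Gh ^ j * H) *ᵥ g (k + j)))
    (u : ℕ → Fin n → ℝ)
    (hu : ∀ k, k ≤ C → u k = (G ^ k) *ᵥ v + (Gh ^ (C - k)) *ᵥ w + ν k) :
    ∀ k, 1 ≤ k → k ≤ C - 1 →
      Am *ᵥ u (k - 1) + A0 *ᵥ u k + A1 *ᵥ u (k + 1) = -g k :=
  matrix_difference_equation_general_solution_general n Am A0 A1 G Gh H hG hGh hH C g v w ν hν u hu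
end

section
/- Let s ∈ ℝ, let B₀, A₋₁, A₀, A₁, C₀ be n×n real matrices, and let G, Ĝ, H be n×n real matrices satisfying A₋₁ + (A₀ − sI)G + A₁G² = 0, A₁ + (A₀ − sI)Ĝ + A₋₁Ĝ² = 0 and (A₀ − sI + A₁G + A₋₁Ĝ)H = −I. Let C ≥ 1 and g₀, …, g_C ∈ ℝⁿ, and set ν_k = Σ_{j=0}^{k−1} Gʲ H g_{k−j} + Σ_{j=1}^{C−k} Ĝʲ H g_{k+j} for 0 ≤ k ≤ C. Let Z(s,C) be the 2n×2n block matrix [[(B₀−sI)+A₁G, ((B₀−sI)Ĝ+A₁)Ĝ^{C−1}], [(A₋₁+(C₀−sI)G)G^{C−1}, A₋₁Ĝ+(C₀−sI)]], and suppose v, w ∈ ℝⁿ satisfy Z(s,C)·[v; w] = −[g₀ + (B₀−sI)ν₀ + A₁ν₁ ; g_C + A₋₁ν_{C−1} + (C₀−sI)ν_C]. Then the vectors R_k = Gᵏv + Ĝ^{C−k}w + ν_k, for 0 ≤ k ≤ C, satisfy the full system: (B₀−sI)R₀ + A₁R₁ = −g₀; A₋₁R_{k−1} + (A₀−sI)R_k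 + A₁R_{k+1} = −g_k for 1 ≤ k ≤ C−1; and A₋₁R_{C−1} + (C₀−sI)R_C = −g_C. -/
/-!
Write `L x_k = A₋₁ x_{k-1} + (A₀ - sI) x_k + A₁ x_{k+1}` for the interior operator. The
quadratic equations for `G` and `Ĝ` say exactly that `L` kills `k ↦ Gᵏ v` and `k ↦ Ĝ^{C-k} w`.
The vector `ν_k` is `∑_{i=1}^C K(k,i) g_i` for the kernel `K(k,i) = G^{k-i} H` (`i ≤ k`),
`Ĝ^{i-k} H` (`k ≤ i`), and `L K(·,i) = -δ_{·,i}`: away from the diagonal this is again the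
quadratic equations, on it the equation defining `H`. Hence `L R = -g` in the interior, while the
two boundary equations are the two block rows of `Z [v; w] = …` once `R₀, R₁, R_{C-1}, R_C` are
expanded.
-/

open Matrix Finset

namespace QBD

variable {ι α : Type*} [Fintype ι] [Ring α]

theorem boundary_row {P Q X Y M : Matrix ι ι α} {v w a b c : ι → α}
    (h : (P + Q * Y) *ᵥ v + ((P * X + Q) * M) *ᵥ w = -(c + P *ᵥ a + Q *ᵥ b)) :
    P *ᵥ (v + (X * M) *ᵥ w + a) + Q *ᵥ (Y *ᵥ v + M *ᵥ w + b) = -c := by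
  rw [← sub_eq_zero, ← sub_eq_zero_of_eq h]
  simp only [mulVec_add, add_mulVec, add_mul, mul_assoc, ← mulVec_mulVec]
  abel

variable [DecidableEq ι]

theorem quadratic_mul_pow {P A Q G : Matrix ι ι α} (h : P + A * G + Q * G ^ 2 = 0) (m : ℕ) :
    P * G ^ m + A * G ^ (m + 1) + Q * G ^ (m + 2) = 0 := by
  calc P * G ^ m + A * G ^ (m + 1) + Q * G ^ (m + 2) = (P + A * G + Q * G ^ 2) * G ^ m := by
        rw [add_mul, add_mul, mul_assoc, mul_assoc, ← pow_succ', ← pow_add, add_comm 2 m]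
    _ = 0 := by rw [h, zero_mul]

theorem quadratic_mulVec_pow {P A Q G : Matrix ι ι α} (h : P + A * G + Q * G ^ 2 = 0) (m : ℕ)
    (v : ι → α) : P *ᵥ (G ^ m *ᵥ v) + A *ᵥ (G ^ (m + 1) *ᵥ v) + Q *ᵥ (G ^ (m + 2) *ᵥ v) = 0 := by
  simp only [mulVec_mulVec, ← add_mulVec, quadratic_mul_pow h, zero_mulVec]

def green (G Gh H : Matrix ι ι α) (k i : ℕ) : Matrix ι ι α :=
  if i ≤ k then G ^ (k - i) * H else Gh ^ (i - k) * H

theorem green_of_le {G Gh H : Matrix ι ι α} {k i : ℕ} (h : i ≤ k) :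
    green G Gh H k i = G ^ (k - i) * H :=
  if_pos h

theorem green_of_ge {G Gh H : Matrix ι ι α} {k i : ℕ} (h : k ≤ i) :
    green G Gh H k i = Gh ^ (i - k) * H := by
  unfold green
  split_ifs with h'
  · obtain rfl : k = i := by omega
    rw [Nat.sub_self, pow_zero, pow_zero]
  · rfl

variable {Am A A1 G Gh H : Matrix ι ι α}

theorem green_recurrence (hG : Am + A * G + A1 * G ^ 2 = 0) (hGh : A1 + A * Gh + Am * Gh ^ 2 = 0)
    (hH : (A + A1 * G + Am * Gh) * H = -1) (k i : ℕ) :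
    Am * green G Gh H k i + A * green G Gh H (k + 1) i + A1 * green G Gh H (k + 2) i =
      if i = k + 1 then -1 else 0 := by
  rcases lt_trichotomy i (k + 1) with hi | rfl | hi
  · obtain ⟨m, rfl⟩ : ∃ m, k = i + m := ⟨k - i, by omega⟩
    rw [if_neg hi.ne, green_of_le (by omega), green_of_le (by omega), green_of_le (by omega),
      show i + m + 1 - i = m + 1 by omega, show i + m + 2 - i = m + 2 by omega,
      Nat.add_sub_cancel_left, ← mul_assoc, ← mul_assoc, ← mul_assoc, ← add_mul, ← add_mul,
      quadratic_mul_pow hG, zero_mul]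
  · rw [if_pos rfl, green_of_ge (by omega), green_of_le le_rfl, green_of_le (by omega),
      Nat.add_sub_cancel_left, Nat.sub_self, show k + 2 - (k + 1) = 1 by omega, pow_zero, pow_one,
      pow_one, one_mul, ← hH]
    noncomm_ring
  · obtain ⟨m, rfl⟩ : ∃ m, i = k + 2 + m := ⟨i - (k + 2), by omega⟩
    rw [if_neg hi.ne', green_of_ge (by omega), green_of_ge (by omega), green_of_ge (by omega),
      show k + 2 + m - k = m + 2 by omega, show k + 2 + m - (k + 1) = m + 1 by omega,
      Nat.add_sub_cancel_left, ← mul_assoc, ← mul_assoc, ← mul_assoc, ← add_mul, ← add_mul,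
      show Am * Gh ^ (m + 2) + A * Gh ^ (m + 1) + A1 * Gh ^ m
        = A1 * Gh ^ m + A * Gh ^ (m + 1) + Am * Gh ^ (m + 2) by abel, quadratic_mul_pow hGh, zero_mul]

theorem sum_green_mulVec (g : ℕ → ι → α) {k C : ℕ} (hk : k ≤ C) :
    ∑ i ∈ Icc 1 C, green G Gh H k i *ᵥ g i =
      (∑ j ∈ range k, (G ^ j * H) *ᵥ g (k - j)) + ∑ j ∈ Icc 1 (C - k), (Gh ^ j * H) *ᵥ g (k + j) := by
  rw [← sum_filter_add_sum_filter_not _ (· ≤ k)]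
  congr 1
  · refine sum_nbij' (k - ·) (k - ·) ?_ ?_ ?_ ?_ ?_ <;> intro i hi <;>
      simp only [mem_filter, mem_Icc, mem_range] at hi
    any_goals (simp only [mem_filter, mem_Icc, mem_range]; omega)
    any_goals omega
    rw [green_of_le hi.2, Nat.sub_sub_self hi.2]
  · refine sum_nbij' (· - k) (k + ·) ?_ ?_ ?_ ?_ ?_ <;> intro i hi <;>
      simp only [mem_filter, mem_Icc, not_le] at hi
    any_goals (simp only [mem_filter, mem_Icc, not_le]; omega)
    any_goals omega
    rw [green_of_ge hi.2.le, Nat.add_sub_cancel' hi.2.le]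

theorem green_sum_recurrence (hG : Am + A * G + A1 * G ^ 2 = 0)
    (hGh : A1 + A * Gh + Am * Gh ^ 2 = 0) (hH : (A + A1 * G + Am * Gh) * H = -1)
    (g : ℕ → ι → α) {k C : ℕ} (hk : k + 1 ≤ C) :
    Am *ᵥ ∑ i ∈ Icc 1 C, green G Gh H k i *ᵥ g i
      + A *ᵥ ∑ i ∈ Icc 1 C, green G Gh H (k + 1) i *ᵥ g i
      + A1 *ᵥ ∑ i ∈ Icc 1 C, green G Gh H (k + 2) i *ᵥ g i = -g (k + 1) := by
  simp only [mulVec_sum, mulVec_mulVec, ← sum_add_distrib, ← add_mulVec,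
    green_recurrence hG hGh hH]
  rw [sum_eq_single_of_mem (k + 1) (by simp only [mem_Icc]; omega)
      fun i _ hi => by rw [if_neg hi, zero_mulVec],
    if_pos rfl, neg_mulVec, one_mulVec]

theorem interior_recurrence (hG : Am + A * G + A1 * G ^ 2 = 0)
    (hGh : A1 + A * Gh + Am * Gh ^ 2 = 0) (hH : (A + A1 * G + Am * Gh) * H = -1)
    {C : ℕ} (g ν R : ℕ → ι → α) (v w : ι → α)
    (hν : ∀ k, k ≤ C → ν k = ∑ i ∈ Icc 1 C, green G Gh H k i *ᵥ g i)
    (hR : ∀ k, k ≤ C → R k = G ^ k *ᵥ v + Gh ^ (C - k) *ᵥ w + ν k) {k : ℕ} (hk : k + 2 ≤ C) :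
    Am *ᵥ R k + A *ᵥ R (k + 1) + A1 *ᵥ R (k + 2) = -g (k + 1) := by
  obtain ⟨m, rfl⟩ : ∃ m, C = k + 2 + m := ⟨C - (k + 2), by omega⟩
  rw [hR k (by omega), hR (k + 1) (by omega), hR (k + 2) (by omega), hν k (by omega),
    hν (k + 1) (by omega), hν (k + 2) (by omega), show k + 2 + m - k = m + 2 by omega,
    show k + 2 + m - (k + 1) = m + 1 by omega, Nat.add_sub_cancel_left]
  calc _ = (Am *ᵥ (G ^ k *ᵥ v) + A *ᵥ (G ^ (k + 1) *ᵥ v) + A1 *ᵥ (G ^ (k + 2) *ᵥ v))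
        + (A1 *ᵥ (Gh ^ m *ᵥ w) + A *ᵥ (Gh ^ (m + 1) *ᵥ w) + Am *ᵥ (Gh ^ (m + 2) *ᵥ w))
        + (Am *ᵥ ∑ i ∈ Icc 1 (k + 2 + m), green G Gh H k i *ᵥ g i
          + A *ᵥ ∑ i ∈ Icc 1 (k + 2 + m), green G Gh H (k + 1) i *ᵥ g i
          + A1 *ᵥ ∑ i ∈ Icc 1 (k + 2 + m), green G Gh H (k + 2) i *ᵥ g i) := by
        simp only [mulVec_add]
        abel
    _ = -g (k + 1) := by
        rw [quadratic_mulVec_pow hG, quadratic_mulVec_pow hGh,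
          green_sum_recurrence hG hGh hH g (by omega), zero_add, zero_add]

end QBD

theorem fromBlocks_mulVec_sumElim_eq_neg {l m n o α : Type*} [Fintype l] [Fintype m] [Ring α]
    {A : Matrix n l α} {B : Matrix n m α} {C : Matrix o l α} {D : Matrix o m α}
    {v : l → α} {w : m → α} {x : n → α} {y : o → α}
    (h : fromBlocks A B C D *ᵥ Sum.elim v w = -Sum.elim x y) :
    A *ᵥ v + B *ᵥ w = -x ∧ C *ᵥ v + D *ᵥ w = -y := by
  rw [fromBlocks_mulVec, Sum.elim_comp_inl, Sum.elim_comp_inr, ← Sum.elim_neg_neg] at h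
  exact ⟨congrArg (· ∘ Sum.inl) h, congrArg (· ∘ Sum.inr) h⟩

/-- (Proposition 2 of the paper, verification part.) With `G(s)`, `Ĝ(s)`
solving the `s`-shifted quadratic equations and `H = H₀(s)`, if `[v; w]` solves the boundary
system `Z(s,C)[v; w] = −[g₀ + (B₀−sI)ν₀ + A₁ν₁ ; g_C + A₋₁ν_{C−1} + (C₀−sI)ν_C]`, then
`R_k = G(s)ᵏ v + Ĝ(s)^{C−k} w + ν_k` solves the full block system `(sI − Q)R = g`.
Here `Am`, `A0`, `A1`, `B0`, `C0` denote `A₋₁`, `A₀`, `A₁`, `B₀`, `C₀` and `Gh` denotes Ĝ. -/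
theorem laplace_reward_block_solution
    (n : ℕ) (s : ℝ) (B0 Am A0 A1 C0 G Gh H : Matrix (Fin n) (Fin n) ℝ)
    (hG : Am + (A0 - s • 1) * G + A1 * G ^ 2 = 0)
    (hGh : A1 + (A0 - s • 1) * Gh + Am * Gh ^ 2 = 0)
    (hH : (A0 - s • 1 + A1 * G + Am * Gh) * H = -1)
    (C : ℕ) (hC : 1 ≤ C)
    (g : ℕ → Fin n → ℝ)
    (ν : ℕ → Fin n → ℝ)
    (hν : ∀ k, k ≤ C → ν k =
      (∑ j ∈ Finset.range k, (G ^ j * H) *ᵥ g (k - j)) +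
      (∑ j ∈ Finset.Icc 1 (C - k), (Gh ^ j * H) *ᵥ g (k + j)))
    (Z : Matrix (Fin n ⊕ Fin n) (Fin n ⊕ Fin n) ℝ)
    (hZ : Z = Matrix.fromBlocks
      ((B0 - s • 1) + A1 * G) (((B0 - s • 1) * Gh + A1) * Gh ^ (C - 1))
      ((Am + (C0 - s • 1) * G) * G ^ (C - 1)) (Am * Gh + (C0 - s • 1)))
    (v w : Fin n → ℝ)
    (hvw : Z *ᵥ Sum.elim v w =
      -Sum.elim (g 0 + (B0 - s • 1) *ᵥ ν 0 + A1 *ᵥ ν 1)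
                (g C + Am *ᵥ ν (C - 1) + (C0 - s • 1) *ᵥ ν C))
    (R : ℕ → Fin n → ℝ)
    (hR : ∀ k, k ≤ C → R k = (G ^ k) *ᵥ v + (Gh ^ (C - k)) *ᵥ w + ν k) :
    ((B0 - s • 1) *ᵥ R 0 + A1 *ᵥ R 1 = -g 0) ∧
    (∀ k, 1 ≤ k → k ≤ C - 1 →
      Am *ᵥ R (k - 1) + (A0 - s • 1) *ᵥ R k + A1 *ᵥ R (k + 1) = -g k) ∧
    (Am *ᵥ R (C - 1) + (C0 - s • 1) *ᵥ R C = -g C) := by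
  obtain ⟨hrow0, hrowC⟩ := fromBlocks_mulVec_sumElim_eq_neg (hZ ▸ hvw)
  have hpow : ∀ M : Matrix (Fin n) (Fin n) ℝ, M ^ C = M * M ^ (C - 1) := fun M => by
    rw [← pow_succ', Nat.sub_add_cancel hC]
  refine ⟨?_, fun k hk1 hkC => ?_, ?_⟩
  · rw [hR 0 (Nat.zero_le C), hR 1 hC, pow_zero, one_mulVec, pow_one, Nat.sub_zero, hpow]
    exact QBD.boundary_row hrow0
  · obtain ⟨j, rfl⟩ : ∃ j, k = j + 1 := ⟨k - 1, by omega⟩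
    refine QBD.interior_recurrence hG hGh hH g ν R v w (fun i hi => ?_) hR (by omega)
    rw [hν i hi, QBD.sum_green_mulVec g hi]
  · rw [hR (C - 1) (Nat.sub_le C 1), hR C le_rfl, Nat.sub_self, Nat.sub_sub_self hC, pow_zero,
      one_mulVec, pow_one, hpow]
    -- the row at level C is the row at level 0 of the reversed chain: G ↔ Ĝ, v ↔ w
    have h := QBD.boundary_row (v := w) (w := v) (a := ν C) (b := ν (C - 1)) (c := g C)
      (P := C0 - s • 1) (Q := Am) (X := G) (Y := Gh) (M := G ^ (C - 1))
      (by simpa only [add_comm, add_left_comm] using hrowC)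
    simpa only [add_comm, add_left_comm] using h
end

section
/- Let s ∈ ℝ, C ≥ 2, and let B₀, A₋₁, A₀, A₁, C₀, G, Ĝ be n×n real matrices with A₋₁ + (A₀ − sI)G + A₁G² = 0 and A₁ + (A₀ − sI)Ĝ + A₋₁Ĝ² = 0. Let 𝒞(s) be the (C−1)n×(C−1)n block tridiagonal matrix with diagonal blocks A₀ − sI, superdiagonal blocks A₁ and subdiagonal blocks A₋₁, and assume 𝒞(s) is invertible. Let 𝒜(s) = diag(B₀ − sI, C₀ − sI) (a 2n×2n block diagonal matrix), let ℬ be the 2n×(C−1)n matrix whose first block row is [A₁, 0, …, 0] and second block row is [0, …, 0, A₋₁], and let 𝒟 be the (C−1)n×2n matrix whose first block row is [A₋₁, 0], last block row is [0, A₁], and all other blocks zero. Then the 2n×2n matrix Z(s,C) = [[(B₀−sI)+A₁G, ((B₀−sI)Ĝ+A₁)Ĝ^{C−1}], [(A₋₁+(C₀−sI)G)G^{C−1}, A₋₁Ĝ+(C₀−sI)]] factorizes as Z(s,C) = (𝒜(s) + ℬ(−𝒞(s))^{−1}𝒟) · [[I, Ĝ^C], [G^C, I]]. -/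
/-!
Stack the two matrix-geometric sequences into `W j = [G ^ j, Ĝ ^ (C - j)]`. The quadratic
equations say exactly that `A₋₁ W (j - 1) + (A₀ - sI) W j + A₁ W (j + 1) = 0` at every level
`0 < j < C`, while `W 0` and `W C` are the two block rows of `M = [[I, Ĝ^C], [G^C, I]]`. Hence
the block column `V` of the interior levels `1, …, C - 1` solves `𝒞(s) V = -𝒟 M`, i.e.
`V = (-𝒞(s))⁻¹ 𝒟 M`, and `Z(s, C) = 𝒜(s) M + ℬ V` block by block.
-/

open Matrix

theorem Fin.sum_ite_val_eq {M : Type*} [AddCommMonoid M] {N : ℕ} (f : Fin N → M) (a : ℕ) :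
    ∑ l : Fin N, (if (l : ℕ) = a then f l else 0) = if h : a < N then f ⟨a, h⟩ else 0 := by
  split_ifs with h
  · rw [Finset.sum_eq_single ⟨a, h⟩ (fun l _ hl => if_neg fun h' => hl (Fin.ext h')) (by simp)]
    simp
  · exact Finset.sum_eq_zero fun l _ => if_neg (by omega)

theorem add_mul_inv_mul_mul_of_mul_eq_neg {R : Type*} [CommRing R] {ι μ ν ν' : Type*}
    [Fintype ι] [DecidableEq ι] [Fintype ν] (A : Matrix μ ν R) (B : Matrix μ ι R)
    (T : Matrix ι ι R) (D : Matrix ι ν R) (M : Matrix ν ν' R) (V : Matrix ι ν' R)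
    (hT : IsUnit T) (hV : T * V = -(D * M)) :
    (A + B * (-T)⁻¹ * D) * M = A * M + B * V := by
  have hsolve : (-T)⁻¹ * (D * M) = V := by
    rw [← neg_neg (D * M), ← hV, ← Matrix.neg_mul,
      nonsing_inv_mul_cancel_left _ _ ((isUnit_iff_isUnit_det _).mp hT.neg)]
  rw [Matrix.add_mul, Matrix.mul_assoc, Matrix.mul_assoc, hsolve]

def blockColumn {α m κ L : Type*} (H : L → Matrix m κ α) : Matrix (L × m) κ α :=
  of fun q c => H q.1 q.2 c

section BlockTridiagonal

variable {α : Type*} [Ring α] {m κ : Type*} [Fintype m]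

theorem mul_blockColumn_apply {ι L m' : Type*} [Fintype L] (A : Matrix ι (L × m) α)
    (F : L → Matrix m' m α) (H : L → Matrix m κ α) {r : ι} {i : m'}
    (hA : ∀ q, A r q = F q.1 i q.2) (c : κ) :
    (A * blockColumn H) r c = (∑ l, F l * H l) i c := by
  simp only [mul_apply, Fintype.sum_prod_type, hA, blockColumn, of_apply, Matrix.sum_apply]

theorem mul_blockColumn_apply_of_single {ι m' : Type*} {N a : ℕ} (ha : a < N)
    (A : Matrix ι (Fin N × m) α) (X : Matrix m' m α) (H : Fin N → Matrix m κ α) {r : ι} {i : m'}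
    (hA : ∀ q, A r q = if (q.1 : ℕ) = a then X i q.2 else 0) (c : κ) :
    (A * blockColumn H) r c = (X * H ⟨a, ha⟩) i c := by
  rw [mul_blockColumn_apply A (fun l => if (l : ℕ) = a then X else 0) H
    (fun q => by rw [hA]; split_ifs <;> rfl), Finset.sum_eq_single ⟨a, ha⟩]
  · simp
  · intro l _ hl
    rw [if_neg fun h => hl (Fin.ext h), Matrix.zero_mul]
  · simp

theorem sum_tridiag_mul {N : ℕ} (k : Fin N) (P Q R : Matrix m m α) (W : ℕ → Matrix m κ α) :
    ∑ l : Fin N, (if k = l then P else if (l : ℕ) = k + 1 then Q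
      else if (k : ℕ) = l + 1 then R else 0) * W (l + 1)
    = (if (k : ℕ) = 0 then 0 else R * W k) + P * W (k + 1)
      + (if (k : ℕ) + 1 < N then Q * W (k + 2) else 0) := by
  have hsplit : ∀ l : Fin N, (if k = l then P else if (l : ℕ) = k + 1 then Q
      else if (k : ℕ) = l + 1 then R else 0) * W (l + 1)
      = (if (l : ℕ) = k - 1 then (if (k : ℕ) = 0 then 0 else R * W (l + 1)) else 0)
        + (if (l : ℕ) = k then P * W (l + 1) else 0)
        + (if (l : ℕ) = k + 1 then Q * W (l + 1) else 0) := by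
    intro l
    simp only [Fin.ext_iff]
    split_ifs <;> first | omega | simp
  simp only [hsplit, Finset.sum_add_distrib, Fin.sum_ite_val_eq]
  obtain ⟨k, hk⟩ := k
  rcases k with _ | k
  · simp [hk]
  · simp [hk, show k < N by omega]

theorem tridiag_row_eq_neg_boundary {C k : ℕ} (hk : k < C - 1) (P Q R : Matrix m m α)
    (W : ℕ → Matrix m κ α) (h : R * W k + P * W (k + 1) + Q * W (k + 2) = 0) :
    (if k = 0 then 0 else R * W k) + P * W (k + 1)
      + (if k + 1 < C - 1 then Q * W (k + 2) else 0)
    = -((if k = 0 then R * W 0 else 0) + (if k = C - 2 then Q * W C else 0)) := by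
  have hleft : (if k = 0 then 0 else R * W k) + (if k = 0 then R * W 0 else 0) = R * W k := by
    rcases eq_or_ne k 0 with rfl | h0 <;> simp [*]
  have hright : (if k + 1 < C - 1 then Q * W (k + 2) else 0)
      + (if k = C - 2 then Q * W C else 0) = Q * W (k + 2) := by
    obtain rfl | hnext : C = k + 2 ∨ k + 1 < C - 1 := by omega
    · simp
    · simp [hnext, show k ≠ C - 2 by omega]
  linear_combination (norm := abel_nf) h + hleft + hright

theorem blockTridiag_mul_blockColumn {C : ℕ} (P Q R : Matrix m m α) (W : ℕ → Matrix m κ α)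
    (hW : ∀ j, j + 2 ≤ C → R * W j + P * W (j + 1) + Q * W (j + 2) = 0)
    (T : Matrix (Fin (C - 1) × m) (Fin (C - 1) × m) α)
    (hT : ∀ p q : Fin (C - 1) × m, T p q =
      if p.1 = q.1 then P p.2 q.2
      else if (q.1 : ℕ) = (p.1 : ℕ) + 1 then Q p.2 q.2
      else if (p.1 : ℕ) = (q.1 : ℕ) + 1 then R p.2 q.2
      else 0)
    (D : Matrix (Fin (C - 1) × m) (m ⊕ m) α)
    (hD₁ : ∀ p j, D p (Sum.inl j) = if (p.1 : ℕ) = 0 then R p.2 j else 0)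
    (hD₂ : ∀ p j, D p (Sum.inr j) = if (p.1 : ℕ) = C - 2 then Q p.2 j else 0) :
    T * blockColumn (fun l : Fin (C - 1) => W (l + 1)) = -(D * fromRows (W 0) (W C)) := by
  ext ⟨k, i⟩ c
  have hDW : (D * fromRows (W 0) (W C)) (k, i) c
      = ((if (k : ℕ) = 0 then R * W 0 else 0) + (if (k : ℕ) = C - 2 then Q * W C else 0)) i c := by
    simp only [mul_apply, Fintype.sum_sum_type, hD₁, hD₂, fromRows_apply_inl, fromRows_apply_inr,
      Matrix.add_apply]
    split_ifs <;> simp [mul_apply]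
  rw [Matrix.neg_apply, hDW, ← Matrix.neg_apply,
    ← tridiag_row_eq_neg_boundary k.isLt P Q R W (hW k (by omega)), ← sum_tridiag_mul]
  refine mul_blockColumn_apply T _ _ (fun q => ?_) c
  rw [hT]
  split_ifs <;> rfl

theorem boundaryRows_mul_blockColumn {C : ℕ} (hC : 2 ≤ C) (Q R : Matrix m m α)
    (W : ℕ → Matrix m κ α) (B : Matrix (m ⊕ m) (Fin (C - 1) × m) α)
    (hB₁ : ∀ i q, B (Sum.inl i) q = if (q.1 : ℕ) = 0 then Q i q.2 else 0)
    (hB₂ : ∀ i q, B (Sum.inr i) q = if (q.1 : ℕ) = C - 2 then R i q.2 else 0) :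
    B * blockColumn (fun l : Fin (C - 1) => W (l + 1)) = fromRows (Q * W 1) (R * W (C - 1)) := by
  ext (i | i) c
  · exact mul_blockColumn_apply_of_single (by omega) B Q _ (hB₁ i) c
  · rw [mul_blockColumn_apply_of_single (by omega) B R _ (hB₂ i) c, fromRows_apply_inr,
      show C - 2 + 1 = C - 1 by omega]

end BlockTridiagonal

theorem quadratic_root_pow_recurrence {S : Type*} [Semiring S] {p q r x : S}
    (h : r + q * x + p * x ^ 2 = 0) (j : ℕ) :
    r * x ^ j + q * x ^ (j + 1) + p * x ^ (j + 2) = 0 := by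
  calc r * x ^ j + q * x ^ (j + 1) + p * x ^ (j + 2)
      = (r + q * x + p * x ^ 2) * x ^ j := by
        simp only [add_mul, mul_assoc, ← pow_succ', ← pow_add, add_comm 2 j]
    _ = 0 := by rw [h, zero_mul]

def geometricLevel {α m : Type*} [Semiring α] [Fintype m] [DecidableEq m] (C : ℕ)
    (G Gh : Matrix m m α) (j : ℕ) : Matrix m (m ⊕ m) α :=
  fromCols (G ^ j) (Gh ^ (C - j))

theorem geometricLevel_recurrence {α m : Type*} [Semiring α] [Fintype m] [DecidableEq m]
    {C j : ℕ} {Am A0 A1 G Gh : Matrix m m α}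
    (hG : Am + A0 * G + A1 * G ^ 2 = 0) (hGh : A1 + A0 * Gh + Am * Gh ^ 2 = 0)
    (hj : j + 2 ≤ C) :
    Am * geometricLevel C G Gh j + A0 * geometricLevel C G Gh (j + 1)
      + A1 * geometricLevel C G Gh (j + 2) = 0 := by
  obtain ⟨i, rfl⟩ : ∃ i, C = j + 2 + i := ⟨C - (j + 2), by omega⟩
  have hGh' := quadratic_root_pow_recurrence hGh i
  calc Am * geometricLevel (j + 2 + i) G Gh j + A0 * geometricLevel (j + 2 + i) G Gh (j + 1)
        + A1 * geometricLevel (j + 2 + i) G Gh (j + 2)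
      = fromCols (Am * G ^ j + A0 * G ^ (j + 1) + A1 * G ^ (j + 2))
          (A1 * Gh ^ i + A0 * Gh ^ (i + 1) + Am * Gh ^ (i + 2)) := by
        simp only [geometricLevel, mul_fromCols, show j + 2 + i - j = i + 2 by omega,
          show j + 2 + i - (j + 1) = i + 1 by omega, show j + 2 + i - (j + 2) = i by omega]
        ext a (b | b) <;> simp only [Matrix.add_apply, fromCols_apply_inl, fromCols_apply_inr]
        abel
    _ = 0 := by rw [quadratic_root_pow_recurrence hG j, hGh', fromCols_zero]

/-- (Factorization of `Z(s,C)` in Proposition 2 of the paper.)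
`Z(s,C) = (𝒜(s) + ℬ(−𝒞(s))⁻¹𝒟) · [[I, Ĝ^C], [G^C, I]]`, where `𝒞(s)` is the interior block
tridiagonal part, `𝒜(s) = diag(B₀−sI, C₀−sI)`, and `ℬ`, `𝒟` are the indicated block rows and
columns. Here `Am`, `A0`, `A1`, `B0`, `C0` denote `A₋₁`, `A₀`, `A₁`, `B₀`, `C₀`, `Gh` denotes
Ĝ, and `cA`, `cB`, `cC`, `cD` denote `𝒜(s)`, `ℬ`, `𝒞(s)`, `𝒟`. -/
theorem Z_factorization_censored_generator
    (n : ℕ) (s : ℝ) (C : ℕ) (hC : 2 ≤ C)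
    (B0 Am A0 A1 C0 G Gh : Matrix (Fin n) (Fin n) ℝ)
    (hG : Am + (A0 - s • 1) * G + A1 * G ^ 2 = 0)
    (hGh : A1 + (A0 - s • 1) * Gh + Am * Gh ^ 2 = 0)
    (cC : Matrix (Fin (C - 1) × Fin n) (Fin (C - 1) × Fin n) ℝ)
    (hcC : ∀ p q : Fin (C - 1) × Fin n, cC p q =
      if p.1 = q.1 then (A0 - s • 1) p.2 q.2
      else if (q.1 : ℕ) = (p.1 : ℕ) + 1 then A1 p.2 q.2
      else if (p.1 : ℕ) = (q.1 : ℕ) + 1 then Am p.2 q.2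
      else 0)
    (hcCinv : IsUnit cC)
    (cA : Matrix (Fin n ⊕ Fin n) (Fin n ⊕ Fin n) ℝ)
    (hcA : cA = Matrix.fromBlocks (B0 - s • 1) 0 0 (C0 - s • 1))
    (cB : Matrix (Fin n ⊕ Fin n) (Fin (C - 1) × Fin n) ℝ)
    (hcB1 : ∀ (i : Fin n) (q : Fin (C - 1) × Fin n),
      cB (Sum.inl i) q = if (q.1 : ℕ) = 0 then A1 i q.2 else 0)
    (hcB2 : ∀ (i : Fin n) (q : Fin (C - 1) × Fin n),
      cB (Sum.inr i) q = if (q.1 : ℕ) = C - 2 then Am i q.2 else 0)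
    (cD : Matrix (Fin (C - 1) × Fin n) (Fin n ⊕ Fin n) ℝ)
    (hcD1 : ∀ (p : Fin (C - 1) × Fin n) (j : Fin n),
      cD p (Sum.inl j) = if (p.1 : ℕ) = 0 then Am p.2 j else 0)
    (hcD2 : ∀ (p : Fin (C - 1) × Fin n) (j : Fin n),
      cD p (Sum.inr j) = if (p.1 : ℕ) = C - 2 then A1 p.2 j else 0)
    (Z : Matrix (Fin n ⊕ Fin n) (Fin n ⊕ Fin n) ℝ)
    (hZ : Z = Matrix.fromBlocks
      ((B0 - s • 1) + A1 * G) (((B0 - s • 1) * Gh + A1) * Gh ^ (C - 1))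
      ((Am + (C0 - s • 1) * G) * G ^ (C - 1)) (Am * Gh + (C0 - s • 1))) :
    Z = (cA + cB * (-cC)⁻¹ * cD) * Matrix.fromBlocks 1 (Gh ^ C) (G ^ C) 1 := by
  set W := geometricLevel C G Gh
  have hM : fromBlocks 1 (Gh ^ C) (G ^ C) 1 = fromRows (W 0) (W C) := by
    simp [W, geometricLevel]
  have hV := blockTridiag_mul_blockColumn (A0 - s • 1) A1 Am W
    (fun j hj => geometricLevel_recurrence hG hGh hj) cC hcC cD hcD1 hcD2
  rw [hM, add_mul_inv_mul_mul_of_mul_eq_neg cA cB cC cD _ _ hcCinv hV,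
    boundaryRows_mul_blockColumn hC A1 Am W cB hcB1 hcB2, ← hM, hZ, hcA, fromBlocks_multiply]
  simp only [W, geometricLevel, mul_fromCols, fromRows_fromCols_eq_fromBlocks, fromBlocks_add,
    pow_one, show C - (C - 1) = 1 by omega]
  have hGC : G ^ C = G * G ^ (C - 1) := by rw [← pow_succ', Nat.sub_add_cancel (by omega)]
  have hGhC : Gh ^ C = Gh * Gh ^ (C - 1) := by rw [← pow_succ', Nat.sub_add_cancel (by omega)]
  rw [hGC, hGhC]
  congr 1 <;> noncomm_ring
end

section
/- Let s ∈ ℝ and let B₀, A₋₁, A₀, A₁, G, Ĝ, H be n×n real matrices satisfying A₋₁ + (A₀ − sI)G + A₁G² = 0, A₁ + (A₀ − sI)Ĝ + A₋₁Ĝ² = 0 and (A₀ − sI + A₁G + A₋₁Ĝ)H = −I. Let g : ℕ → ℝⁿ and suppose that for every k ≥ 0 the series Σ_{j=1}^{∞} Ĝʲ H g_{k+j} converges. Define ν_k = Σ_{j=0}^{k−1} Gʲ H g_{k−j} + Σ_{j=1}^{∞} Ĝʲ H g_{k+j} for k ≥ 0, assume (B₀ − sI) + A₁G is invertible, and set v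 = −((B₀ − sI) + A₁G)^{−1}(g₀ + (B₀ − sI)ν₀ + A₁ν₁). Then the vectors R_k = Gᵏ v + ν_k satisfy (B₀ − sI)R₀ + A₁R₁ = −g₀ and A₋₁R_{k−1} + (A₀ − sI)R_k + A₁R_{k+1} = −g_k for all k ≥ 1. -/
/-!
The level vectors split as `Rₖ = Gᵏ v + νₖ`. The first quadratic equation makes `k ↦ Gᵏ v` a
solution of the homogeneous interior equations. For `ν`, the finite part satisfies
`lower(k+1) = H g(k+1) + G lower(k)` and the tail `upper(k) = Ĝ H g(k+1) + Ĝ upper(k+1)`;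
substituting these into the interior equation at level `k+1`, every term is killed by one of the
two quadratic equations except `(A₀ - sI + A₁G + A₋₁Ĝ) H g(k+1) = -g(k+1)`. Finally `v` is
exactly the vector that makes the boundary equation hold, which needs `(B₀ - sI) + A₁G` invertible.
-/

open Matrix Finset

theorem Matrix.mulVec_tsum {κ ι R : Type*} [Fintype ι] [CommSemiring R] [TopologicalSpace R]
    [IsTopologicalSemiring R] [T2Space R] (A : Matrix κ ι R) {f : ℕ → ι → R} (hf : Summable f) :
    A *ᵥ ∑' j, f j = ∑' j, A *ᵥ f j :=
  hf.map_tsum (mulVecLin A) (continuous_const.matrix_mulVec continuous_id)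

namespace QBD

variable {ι R : Type*} [Fintype ι] [DecidableEq ι] [CommRing R]

theorem boundary_eq_neg_of_isUnit {B A1 G : Matrix ι ι R} (hinv : IsUnit (B + A1 * G))
    {b x y v : ι → R} (hv : v = -(B + A1 * G)⁻¹ *ᵥ (b + B *ᵥ x + A1 *ᵥ y)) :
    B *ᵥ (v + x) + A1 *ᵥ (G *ᵥ v + y) = -b := by
  have hBv : (B + A1 * G) *ᵥ v = -(b + B *ᵥ x + A1 *ᵥ y) := by
    rw [hv, neg_mulVec, mulVec_neg, mulVec_mulVec,
      mul_nonsing_inv _ ((isUnit_iff_isUnit_det _).mp hinv), one_mulVec]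
  calc B *ᵥ (v + x) + A1 *ᵥ (G *ᵥ v + y)
      = (B + A1 * G) *ᵥ v + (B *ᵥ x + A1 *ᵥ y) := by
        rw [mulVec_add, mulVec_add, add_mulVec, mulVec_mulVec]; abel
    _ = -b := by rw [hBv]; abel

theorem pow_mulVec_interior_eq_zero {Am A A1 G : Matrix ι ι R} (hG : Am + A * G + A1 * G ^ 2 = 0)
    (v : ι → R) (k : ℕ) :
    Am *ᵥ (G ^ k *ᵥ v) + A *ᵥ (G ^ (k + 1) *ᵥ v) + A1 *ᵥ (G ^ (k + 2) *ᵥ v) = 0 := by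
  have : ((Am + A * G + A1 * G ^ 2) * G ^ k) *ᵥ v = 0 := by rw [hG, zero_mul, zero_mulVec]
  rw [← this, add_mul, add_mul, add_mulVec, add_mulVec, Matrix.mul_assoc, Matrix.mul_assoc,
    ← pow_succ', ← pow_add, ← mulVec_mulVec, ← mulVec_mulVec, ← mulVec_mulVec, add_comm 2]

def lowerSum (G H : Matrix ι ι R) (g : ℕ → ι → R) (k : ℕ) : ι → R :=
  ∑ j ∈ range k, (G ^ j * H) *ᵥ g (k - j)

theorem lowerSum_succ (G H : Matrix ι ι R) (g : ℕ → ι → R) (k : ℕ) :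
    lowerSum G H g (k + 1) = H *ᵥ g (k + 1) + G *ᵥ lowerSum G H g k := by
  rw [lowerSum, sum_range_succ', lowerSum, mulVec_sum, add_comm]
  congr 1
  · simp
  · refine sum_congr rfl fun j _ => ?_
    rw [mulVec_mulVec, pow_succ', Matrix.mul_assoc, Nat.add_sub_add_right]

variable [TopologicalSpace R]

noncomputable def upperTail (Gh H : Matrix ι ι R) (g : ℕ → ι → R) (k : ℕ) : ι → R :=
  ∑' j, (Gh ^ (j + 1) * H) *ᵥ g (k + (j + 1))

theorem upperTail_eq_add [IsTopologicalRing R] [T2Space R]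
    (Gh H : Matrix ι ι R) (g : ℕ → ι → R) (k : ℕ)
    (hk : Summable fun j : ℕ => (Gh ^ (j + 1) * H) *ᵥ g (k + (j + 1)))
    (hk₁ : Summable fun j : ℕ => (Gh ^ (j + 1) * H) *ᵥ g (k + 1 + (j + 1))) :
    upperTail Gh H g k = (Gh * H) *ᵥ g (k + 1) + Gh *ᵥ upperTail Gh H g (k + 1) := by
  rw [upperTail, hk.tsum_eq_zero_add, upperTail, mulVec_tsum Gh hk₁]
  congr 1
  · simp
  · refine tsum_congr fun j => ?_
    rw [mulVec_mulVec, ← Matrix.mul_assoc, ← pow_succ', add_right_comm k 1, add_assoc k]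

noncomputable def particularSolution (G Gh H : Matrix ι ι R) (g : ℕ → ι → R) (k : ℕ) : ι → R :=
  lowerSum G H g k + upperTail Gh H g k

theorem particularSolution_interior_eq [IsTopologicalRing R] [T2Space R]
    {Am A A1 G Gh H : Matrix ι ι R} (hG : Am + A * G + A1 * G ^ 2 = 0)
    (hGh : A1 + A * Gh + Am * Gh ^ 2 = 0) (hH : (A + A1 * G + Am * Gh) * H = -1)
    {g : ℕ → ι → R} (hsum : ∀ k, Summable fun j : ℕ => (Gh ^ (j + 1) * H) *ᵥ g (k + (j + 1)))
    (k : ℕ) :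
    Am *ᵥ particularSolution G Gh H g k + A *ᵥ particularSolution G Gh H g (k + 1) +
      A1 *ᵥ particularSolution G Gh H g (k + 2) = -g (k + 1) := by
  set x := lowerSum G H g k
  set y := upperTail Gh H g (k + 2)
  have hν₀ : particularSolution G Gh H g k =
      x + ((Gh * H) *ᵥ g (k + 1) + Gh *ᵥ ((Gh * H) *ᵥ g (k + 2) + Gh *ᵥ y)) := by
    rw [particularSolution, upperTail_eq_add _ _ _ _ (hsum k) (hsum _),
      upperTail_eq_add _ _ _ _ (hsum _) (hsum _)]
  have hν₁ : particularSolution G Gh H g (k + 1) =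
      H *ᵥ g (k + 1) + G *ᵥ x + ((Gh * H) *ᵥ g (k + 2) + Gh *ᵥ y) := by
    rw [particularSolution, lowerSum_succ, upperTail_eq_add _ _ _ _ (hsum _) (hsum _)]
  have hν₂ : particularSolution G Gh H g (k + 2) =
      H *ᵥ g (k + 2) + G *ᵥ (H *ᵥ g (k + 1) + G *ᵥ x) + y := by
    rw [particularSolution, lowerSum_succ, lowerSum_succ]
  calc _ = (Am + A * G + A1 * G ^ 2) *ᵥ x + ((A + A1 * G + Am * Gh) * H) *ᵥ g (k + 1) +
        ((A1 + A * Gh + Am * Gh ^ 2) * H) *ᵥ g (k + 2) + (A1 + A * Gh + Am * Gh ^ 2) *ᵥ y := by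
        rw [hν₀, hν₁, hν₂]
        simp only [mulVec_add, add_mulVec, mulVec_mulVec, add_mul, pow_two, Matrix.mul_assoc]
        abel
    _ = -g (k + 1) := by simp [hG, hGh, hH, neg_mulVec]

end QBD

open QBD in
/-- (Corollary 3 of the paper, level-unbounded case.) With `G`, `Ĝ` (here `Gh`)
solving the `s`-shifted quadratic equations, `H = H₀(s)`, and convergent tails
`Σ_{j=1}^∞ Ĝʲ H g_{k+j}`, the vectors `R_k = Gᵏ v + ν_k`, where
`v = −((B₀−sI) + A₁G)⁻¹(g₀ + (B₀−sI)ν₀ + A₁ν₁)`, solve the level-unbounded block system.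
`Am`, `A0`, `A1`, `B0` denote `A₋₁`, `A₀`, `A₁`, `B₀`. -/
theorem unbounded_laplace_reward_solution
    (n : ℕ) (s : ℝ) (B0 Am A0 A1 G Gh H : Matrix (Fin n) (Fin n) ℝ)
    (hG : Am + (A0 - s • 1) * G + A1 * G ^ 2 = 0)
    (hGh : A1 + (A0 - s • 1) * Gh + Am * Gh ^ 2 = 0)
    (hH : (A0 - s • 1 + A1 * G + Am * Gh) * H = -1)
    (g : ℕ → Fin n → ℝ)
    (hsum : ∀ k : ℕ, Summable (fun j : ℕ => (Gh ^ (j + 1) * H) *ᵥ g (k + (j + 1))))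
    (ν : ℕ → Fin n → ℝ)
    (hν : ∀ k, ν k =
      (∑ j ∈ Finset.range k, (G ^ j * H) *ᵥ g (k - j)) +
      (∑' j : ℕ, (Gh ^ (j + 1) * H) *ᵥ g (k + (j + 1))))
    (hinv : IsUnit ((B0 - s • 1) + A1 * G))
    (v : Fin n → ℝ)
    (hv : v = -((B0 - s • 1) + A1 * G)⁻¹ *ᵥ
      (g 0 + (B0 - s • 1) *ᵥ ν 0 + A1 *ᵥ ν 1))
    (R : ℕ → Fin n → ℝ)
    (hR : ∀ k, R k = (G ^ k) *ᵥ v + ν k) :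
    ((B0 - s • 1) *ᵥ R 0 + A1 *ᵥ R 1 = -g 0) ∧
    (∀ k, 1 ≤ k →
      Am *ᵥ R (k - 1) + (A0 - s • 1) *ᵥ R k + A1 *ᵥ R (k + 1) = -g k) := by
  obtain rfl : ν = particularSolution G Gh H g := funext hν
  refine ⟨?_, fun k hk => ?_⟩
  · rw [hR, hR, pow_zero, one_mulVec, pow_one]
    exact boundary_eq_neg_of_isUnit hinv hv
  · obtain ⟨m, rfl⟩ := Nat.exists_eq_add_of_le' hk
    rw [Nat.add_sub_cancel, hR, hR, hR]
    simp only [mulVec_add]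
    linear_combination
      pow_mulVec_interior_eq_zero hG v m + particularSolution_interior_eq hG hGh hH hsum m
end

section
/- Let Q be an m×m real matrix with Q𝟙 = 0, π ∈ ℝᵐ a row vector with πQ = 0 and π𝟙 = 1, and D an m×m real matrix with QD = 𝟙π − I, DQ = 𝟙π − I, πD = 0 and D𝟙 = 0. Let C₀ be an invertible n×n real matrix and M an n×m real matrix with M𝟙 = −C₀𝟙. Define the (m+n)×(m+n) block matrices T = [[Q, 0], [M, C₀]] and S = [[−D, 0], [C₀^{−1}(MD − 𝟙π), C₀^{−1}]]. Then S is the group inverse of T: T S T = T, S T S = S and S T = T S. -/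
/-!
Let `Z = fromBlocks (𝟙π) 0 (𝟙π) 0` be the ergodic projector of `T` (whose stationary vector is
`(π, 0)`). A block computation gives `T S = S T = 1 - Z`, and `Z` annihilates `T` and `S` from the
left because `πQ = 0` and `πD = 0`; these four identities alone force the group-inverse equations.
The lower-left block of `S T` collapses to `-𝟙π` because `M 𝟙π = -C₀ 𝟙π`, the matrix form of
`M𝟙 = -C₀𝟙`.
-/

open Matrix

def IsGroupInverse {α : Type*} [Mul α] (a b : α) : Prop :=
  a * b * a = a ∧ b * a * b = b ∧ b * a = a * b

theorem IsGroupInverse.of_mul_eq_one_sub {α : Type*} [Ring α] {a b z : α}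
    (hab : a * b = 1 - z) (hba : b * a = 1 - z) (hza : z * a = 0) (hzb : z * b = 0) :
    IsGroupInverse a b := by
  refine ⟨?_, ?_, hba.trans hab.symm⟩
  · rw [hab, sub_mul, hza, one_mul, sub_zero]
  · rw [hba, sub_mul, hzb, one_mul, sub_zero]

theorem vecMulVec_mul_eq_zero {R : Type*} [NonUnitalSemiring R] {l m n : Type*} [Fintype m]
    {w : l → R} {v : m → R} {A : Matrix m n R} (h : v ᵥ* A = 0) : vecMulVec w v * A = 0 := by
  rw [vecMulVec_mul, h]
  exact ext fun _ _ => mul_zero _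

theorem one_sub_fromBlocks_zero_right {R : Type*} [Ring R] {m n : Type*} [DecidableEq m]
    [DecidableEq n] (P : Matrix m m R) (P' : Matrix n m R) :
    1 - fromBlocks P 0 P' (0 : Matrix n n R) = fromBlocks (1 - P) 0 (-P') 1 := by
  rw [← fromBlocks_one, sub_eq_add_neg, fromBlocks_neg, fromBlocks_add]
  simp [sub_eq_add_neg]

section BlockTriangular

variable {R : Type*} [Ring R] {m n : Type*} [Fintype m] [Fintype n] [DecidableEq m]
  [DecidableEq n] {Q D P : Matrix m m R} {M P' : Matrix n m R} {C C' : Matrix n n R}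

theorem fromBlocks_mul_fromBlocks_groupInverse (hQD : Q * D = P - 1) (hCC' : C * C' = 1) :
    fromBlocks Q 0 M C * fromBlocks (-D) 0 (C' * (M * D - P')) C' =
      1 - fromBlocks P 0 P' 0 := by
  rw [fromBlocks_multiply, one_sub_fromBlocks_zero_right]
  congr 1
  · rw [Matrix.mul_neg, hQD, Matrix.zero_mul, add_zero, neg_sub]
  · simp
  · rw [Matrix.mul_neg, ← Matrix.mul_assoc, hCC', Matrix.one_mul]; abel
  · simp [hCC']

theorem fromBlocks_groupInverse_mul_fromBlocks (hDQ : D * Q = P - 1) (hP'Q : P' * Q = 0)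
    (hMP : M * P = -(C * P')) (hC'C : C' * C = 1) :
    fromBlocks (-D) 0 (C' * (M * D - P')) C' * fromBlocks Q 0 M C =
      1 - fromBlocks P 0 P' 0 := by
  rw [fromBlocks_multiply, one_sub_fromBlocks_zero_right]
  congr 1
  · rw [Matrix.neg_mul, hDQ, Matrix.zero_mul, add_zero, neg_sub]
  · simp
  · calc C' * (M * D - P') * Q + C' * M
        = C' * (M * (D * Q) - P' * Q + M) := by
          simp only [Matrix.mul_add, Matrix.mul_sub, Matrix.sub_mul, Matrix.mul_assoc]
      _ = C' * (M * P) := by rw [hDQ, hP'Q, Matrix.mul_sub, Matrix.mul_one]; abel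
      _ = -P' := by rw [hMP, Matrix.mul_neg, ← Matrix.mul_assoc, hC'C, Matrix.one_mul]
  · simp [hC'C]

theorem isGroupInverse_fromBlocks (hQD : Q * D = P - 1) (hDQ : D * Q = P - 1)
    (hPQ : P * Q = 0) (hPD : P * D = 0) (hP'Q : P' * Q = 0) (hP'D : P' * D = 0)
    (hMP : M * P = -(C * P')) (hCC' : C * C' = 1) (hC'C : C' * C = 1) :
    IsGroupInverse (fromBlocks Q 0 M C) (fromBlocks (-D) 0 (C' * (M * D - P')) C') :=
  .of_mul_eq_one_sub (z := fromBlocks P 0 P' 0)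
    (fromBlocks_mul_fromBlocks_groupInverse hQD hCC')
    (fromBlocks_groupInverse_mul_fromBlocks hDQ hP'Q hMP hC'C)
    (by simp [fromBlocks_multiply, hPQ, hP'Q])
    (by simp [fromBlocks_multiply, hPD, hP'D])

end BlockTriangular

theorem group_inverse_of_block_triangular_generator_general
    (m n : ℕ) (Q : Matrix (Fin m) (Fin m) ℝ)
    (π : Fin m → ℝ)
    (hπQ : π ᵥ* Q = 0)
    (onePi : Matrix (Fin m) (Fin m) ℝ)
    (honePi : ∀ i j, onePi i j = π j)
    (D : Matrix (Fin m) (Fin m) ℝ)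
    (hQD : Q * D = onePi - 1)
    (hDQ : D * Q = onePi - 1)
    (hπD : π ᵥ* D = 0)
    (C0 : Matrix (Fin n) (Fin n) ℝ) (hC0 : IsUnit C0)
    (M : Matrix (Fin n) (Fin m) ℝ)
    (hM1 : M *ᵥ (fun _ => (1 : ℝ)) = -(C0 *ᵥ fun _ => (1 : ℝ)))
    (onePi' : Matrix (Fin n) (Fin m) ℝ)
    (honePi' : ∀ i j, onePi' i j = π j)
    (T : Matrix (Fin m ⊕ Fin n) (Fin m ⊕ Fin n) ℝ)
    (hT : T = Matrix.fromBlocks Q 0 M C0)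
    (S : Matrix (Fin m ⊕ Fin n) (Fin m ⊕ Fin n) ℝ)
    (hS : S = Matrix.fromBlocks (-D) 0 (C0⁻¹ * (M * D - onePi')) C0⁻¹) :
    T * S * T = T ∧ S * T * S = S ∧ S * T = T * S := by
  have hP : onePi = vecMulVec (fun _ => 1) π := by ext; simp [honePi, vecMulVec_apply]
  have hP' : onePi' = vecMulVec (fun _ => 1) π := by ext; simp [honePi', vecMulVec_apply]
  have hdet : IsUnit C0.det := C0.isUnit_iff_isUnit_det.mp hC0
  subst hT hS hP hP'
  refine isGroupInverse_fromBlocks hQD hDQ (vecMulVec_mul_eq_zero hπQ) (vecMulVec_mul_eq_zero hπD)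
    (vecMulVec_mul_eq_zero hπQ) (vecMulVec_mul_eq_zero hπD) ?_
    (mul_nonsing_inv C0 hdet) (nonsing_inv_mul C0 hdet)
  rw [mul_vecMulVec, mul_vecMulVec, hM1, neg_vecMulVec]

/-- (Lemma 4 of the paper.) If `D` is the deviation matrix of the ergodic
generator `Q` with stationary row vector `π`, `C₀` (here `C0`) is invertible and
`M𝟙 = −C₀𝟙`, then `S = [[−D, 0], [C₀⁻¹(MD − 𝟙π), C₀⁻¹]]` is the group inverse of the
block lower-triangular generator `T = [[Q, 0], [M, C₀]]`. -/
theorem group_inverse_of_block_triangular_generator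
    (m n : ℕ) (Q : Matrix (Fin m) (Fin m) ℝ)
    (hQ1 : Q *ᵥ (fun _ => (1 : ℝ)) = 0)
    (π : Fin m → ℝ)
    (hπQ : π ᵥ* Q = 0)
    (hπ1 : π ⬝ᵥ (fun _ => (1 : ℝ)) = 1)
    (onePi : Matrix (Fin m) (Fin m) ℝ)
    (honePi : ∀ i j, onePi i j = π j)
    (D : Matrix (Fin m) (Fin m) ℝ)
    (hQD : Q * D = onePi - 1)
    (hDQ : D * Q = onePi - 1)
    (hπD : π ᵥ* D = 0)
    (hD1 : D *ᵥ (fun _ => (1 : ℝ)) = 0)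
    (C0 : Matrix (Fin n) (Fin n) ℝ) (hC0 : IsUnit C0)
    (M : Matrix (Fin n) (Fin m) ℝ)
    (hM1 : M *ᵥ (fun _ => (1 : ℝ)) = -(C0 *ᵥ fun _ => (1 : ℝ)))
    (onePi' : Matrix (Fin n) (Fin m) ℝ)
    (honePi' : ∀ i j, onePi' i j = π j)
    (T : Matrix (Fin m ⊕ Fin n) (Fin m ⊕ Fin n) ℝ)
    (hT : T = Matrix.fromBlocks Q 0 M C0)
    (S : Matrix (Fin m ⊕ Fin n) (Fin m ⊕ Fin n) ℝ)
    (hS : S = Matrix.fromBlocks (-D) 0 (C0⁻¹ * (M * D - onePi')) C0⁻¹) :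
    T * S * T = T ∧ S * T * S = S ∧ S * T = T * S :=
  group_inverse_of_block_triangular_generator_general m n Q π hπQ onePi honePi D hQD hDQ hπD C0 hC0
    M hM1 onePi' honePi' T hT S hS
end

section
/- Let A and Ã be N×N real matrices, α and α̃ row vectors in ℝ^N, and A^{#} an N×N real matrix. Assume A·A^{#} = I − 𝟙α, α̃Ã = 0, and α̃𝟙 = 1. Then α̃(I + (Ã − A)A^{#}) = α. In particular, if I + (Ã − A)A^{#} is invertible, the stationary row vector of Ã is recovered from that of A as α̃ = α(I + (Ã − A)A^{#})^{−1}. -/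
open Matrix

namespace Matrix

variable {n R : Type*} [Fintype n] [DecidableEq n]

/-- Since `u Ã = 0`, `u (1 + (Ã - A) A#) = u - u (A A#) = u - u (1 - P) = u P`. -/
theorem vecMul_one_add_sub_mul_eq_vecMul_of_mul_eq_one_sub [Ring R]
    {A At As P : Matrix n n R} {u : n → R} (hAAs : A * As = 1 - P) (huAt : u ᵥ* At = 0) :
    u ᵥ* (1 + (At - A) * As) = u ᵥ* P := by
  rw [sub_mul, hAAs, vecMul_add, vecMul_sub, ← vecMul_vecMul, huAt, zero_vecMul, vecMul_sub,
    vecMul_one]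
  abel

theorem eq_vecMul_nonsing_inv_of_vecMul_eq [CommRing R] {M : Matrix n n R} {u w : n → R}
    (hM : IsUnit M) (h : u ᵥ* M = w) : u = w ᵥ* M⁻¹ := by
  rw [← h, vecMul_vecMul, mul_nonsing_inv _ ((isUnit_iff_isUnit_det M).mp hM), vecMul_one]

end Matrix

/-- (Equation (19) of the paper.) If `AA# = I − 𝟙α`, `α̃Ã = 0` and
`α̃𝟙 = 1`, then `α̃(I + (Ã − A)A#) = α`; in particular, if `I + (Ã − A)A#` is invertible,
then `α̃ = α(I + (Ã − A)A#)⁻¹`. Here `At`, `αt`, `Asharp` denote `Ã`, `α̃`, `A#`. -/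
theorem stationary_vector_of_perturbed_generator
    (N : ℕ) (A At : Matrix (Fin N) (Fin N) ℝ)
    (α αt : Fin N → ℝ)
    (Asharp : Matrix (Fin N) (Fin N) ℝ)
    (oneAlpha : Matrix (Fin N) (Fin N) ℝ)
    (honeAlpha : ∀ i j, oneAlpha i j = α j)
    (hAAs : A * Asharp = 1 - oneAlpha)
    (hαtAt : αt ᵥ* At = 0)
    (hαt1 : αt ⬝ᵥ (fun _ => (1 : ℝ)) = 1) :
    αt ᵥ* ((1 : Matrix (Fin N) (Fin N) ℝ) + (At - A) * Asharp) = α ∧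
    (IsUnit ((1 : Matrix (Fin N) (Fin N) ℝ) + (At - A) * Asharp) →
      αt = α ᵥ* ((1 : Matrix (Fin N) (Fin N) ℝ) + (At - A) * Asharp)⁻¹) := by
  have hOneAlpha : oneAlpha = vecMulVec 1 α :=
    ext fun i j => (honeAlpha i j).trans (one_mul (α j)).symm
  have hStationary : αt ᵥ* (1 + (At - A) * Asharp) = α := by
    rw [vecMul_one_add_sub_mul_eq_vecMul_of_mul_eq_one_sub hAAs hαtAt, hOneAlpha,
      vecMul_vecMulVec, Pi.one_def, hαt1, one_smul]
  exact ⟨hStationary, fun hU => eq_vecMul_nonsing_inv_of_vecMul_eq hU hStationary⟩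
end

section
/- Let Q be an N×N real matrix, q and π̃ row vectors in ℝ^N, D an N×N real matrix, E an N×n real matrix and P an n×N real matrix. Assume: QD = 𝟙q − I; D𝟙 = 0; q𝟙 = 1; the matrix I − EPD is invertible; the perturbed matrix Q̃ = Q + EP satisfies Q̃𝟙 = 0; and π̃ = q(I − EPD)^{−1}. Then π̃𝟙 = 1 and the matrix D̃ = (I − 𝟙π̃) D (I − EPD)^{−1} satisfies Q̃D̃ = 𝟙π̃ − I and π̃D̃ = 0; that is, D̃ is the deviation matrix of the updated generator Q̃. -/
open Matrix

/-!
With `M = I − EPD`, the hypothesis `D𝟙 = 0` gives `M𝟙 = 𝟙`, hence `M⁻¹𝟙 = 𝟙` and `π̃𝟙 = q𝟙 = 1`.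
Since `Q̃𝟙 = 0`, the factor `I − 𝟙π̃` is invisible to `Q̃`, and `Q̃D = QD + EPD = 𝟙q − M`;
multiplying by `M⁻¹` gives `𝟙π̃ − I`. Finally `π̃(I − 𝟙π̃) = π̃ − (π̃𝟙)π̃ = 0`.
-/

namespace Matrix

variable {m R : Type*} [Fintype m] [DecidableEq m]

theorem one_sub_mul_mulVec_of_mulVec_eq_zero [Ring R] {A D : Matrix m m R} {v : m → R}
    (hD : D *ᵥ v = 0) : (1 - A * D) *ᵥ v = v := by
  rw [sub_mulVec, one_mulVec, ← mulVec_mulVec, hD, mulVec_zero, sub_zero]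

theorem inv_mulVec_eq_self_of_mulVec_eq_self [CommRing R] {A : Matrix m m R} {v : m → R}
    (hA : IsUnit A) (h : A *ᵥ v = v) : A⁻¹ *ᵥ v = v :=
  have := hA.invertible
  inv_mulVec_eq_vec h.symm

theorem mul_one_sub_vecMulVec_of_mulVec_eq_zero [Ring R] {A : Matrix m m R} {v w : m → R}
    (h : A *ᵥ v = 0) : A * (1 - vecMulVec v w) = A := by
  rw [mul_sub, mul_one, mul_vecMulVec, h, zero_vecMulVec, sub_zero]

theorem vecMul_one_sub_vecMulVec_self [Ring R] {v w : m → R} (h : w ⬝ᵥ v = 1) :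
    w ᵥ* (1 - vecMulVec v w) = 0 := by
  rw [vecMul_sub, vecMul_one, vecMul_vecMulVec, h, one_smul, sub_self]

end Matrix

/-- (Proposition 8 of the paper.) Let `Q` have stationary row vector `q` and
deviation matrix `D` (`QD = 𝟙q − I`, `D𝟙 = 0`, `q𝟙 = 1`), let `Q̃ = Q + EP` be a generator
(`Q̃𝟙 = 0`), assume `I − EPD` invertible and set `π̃ = q(I − EPD)⁻¹` (here `πt`). Then
`π̃𝟙 = 1` and `D̃ = (I − 𝟙π̃)D(I − EPD)⁻¹` satisfies `Q̃D̃ = 𝟙π̃ − I` and `π̃D̃ = 0`,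
i.e. `D̃` is the deviation matrix of `Q̃`. -/
theorem deviation_matrix_of_updated_generator
    (N n : ℕ) (Q : Matrix (Fin N) (Fin N) ℝ)
    (q πt : Fin N → ℝ)
    (D : Matrix (Fin N) (Fin N) ℝ)
    (E : Matrix (Fin N) (Fin n) ℝ) (P : Matrix (Fin n) (Fin N) ℝ)
    (oneQ : Matrix (Fin N) (Fin N) ℝ) (honeQ : ∀ i j, oneQ i j = q j)
    (onePit : Matrix (Fin N) (Fin N) ℝ) (honePit : ∀ i j, onePit i j = πt j)
    (hQD : Q * D = oneQ - 1)
    (hD1 : D *ᵥ (fun _ => (1 : ℝ)) = 0)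
    (hq1 : q ⬝ᵥ (fun _ => (1 : ℝ)) = 1)
    (hinv : IsUnit ((1 : Matrix (Fin N) (Fin N) ℝ) - E * P * D))
    (hQt1 : (Q + E * P) *ᵥ (fun _ => (1 : ℝ)) = 0)
    (hπt : πt = q ᵥ* ((1 : Matrix (Fin N) (Fin N) ℝ) - E * P * D)⁻¹) :
    πt ⬝ᵥ (fun _ => (1 : ℝ)) = 1 ∧
    (Q + E * P) * ((1 - onePit) * D * ((1 : Matrix (Fin N) (Fin N) ℝ) - E * P * D)⁻¹) =
      onePit - 1 ∧
    πt ᵥ* ((1 - onePit) * D * ((1 : Matrix (Fin N) (Fin N) ℝ) - E * P * D)⁻¹) = 0 := by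
  simp only [← Pi.one_def] at hD1 hq1 hQt1 ⊢
  obtain rfl : oneQ = vecMulVec 1 q := by ext i j; simp [honeQ, vecMulVec_apply]
  obtain rfl : onePit = vecMulVec 1 πt := by ext i j; simp [honePit, vecMulVec_apply]
  set M := (1 : Matrix (Fin N) (Fin N) ℝ) - E * P * D
  have hM1 : M⁻¹ *ᵥ 1 = 1 :=
    inv_mulVec_eq_self_of_mulVec_eq_self hinv (one_sub_mul_mulVec_of_mulVec_eq_zero hD1)
  have hπt1 : πt ⬝ᵥ 1 = 1 := by rw [hπt, ← dotProduct_mulVec, hM1, hq1]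
  refine ⟨hπt1, ?_, ?_⟩
  · have hQtD : (Q + E * P) * D = vecMulVec 1 q - M := by
      rw [add_mul, hQD, sub_sub_eq_add_sub, add_sub_right_comm]
    have hMM : M * M⁻¹ = 1 := mul_nonsing_inv M ((isUnit_iff_isUnit_det M).mp hinv)
    rw [← Matrix.mul_assoc, ← Matrix.mul_assoc, mul_one_sub_vecMulVec_of_mulVec_eq_zero hQt1,
      hQtD, sub_mul, vecMulVec_mul, hMM, ← hπt]
  · rw [← vecMul_vecMul, ← vecMul_vecMul, vecMul_one_sub_vecMulVec_self hπt1, zero_vecMul,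
      zero_vecMul]
end
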